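/- arXiv:1607.04913 — 2 statements merged into one kernel-verified Lean document; each statement's English description precedes it below -/
import Mathlib

section
/- Let T be a rooted tree with n = |V(T)| vertices and let k be an integer with 2 ≤ k ≤ n. Then there exists a subset M ⊆ V(T) with |M| ≤ 3n/k such that every connected component of the forest obtained from T by deleting all vertices of M contains at most k vertices. -/
/-!
Root the tree at `r` and induct on the set `S` of vertices still to be separated. If `|S| > k`,
let `v` be a deepest vertex whose subtree contains more than `k` vertices of `S`. Each subtree of a
child of `v` contains at most `k` of them, and the subtree of `v` meets the rest of the tree only
through `v`; so cutting `v` splits off more than `k` vertices of `S` into pieces of size at most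
`k`, and we recurse on what lies outside the subtree. Every cut vertex thus pays for at least
`k + 1` vertices, giving `|M| ≤ n / (k + 1)`.
-/

/-- In a rooted tree `T` with root `r`, a vertex `u` is an ancestor of `v` if `u`
lies on the (unique) path from `r` to `v`. -/
def IsAncestor {V : Type*} (T : SimpleGraph V) (r u v : V) : Prop :=
  ∀ p : T.Path r v, u ∈ p.val.support

namespace SimpleGraph

variable {V : Type*} {T : SimpleGraph V}

def ReachableIn (T : SimpleGraph V) (S : Set V) (a b : V) : Prop :=
  ∃ p : T.Walk a b, ∀ x ∈ p.support, x ∈ S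

namespace ReachableIn

variable {S K : Set V} {a b : V}

lemma mem_left (h : T.ReachableIn S a b) : a ∈ S :=
  h.elim fun p hp => hp a p.start_mem_support

lemma mem_right (h : T.ReachableIn S a b) : b ∈ S :=
  h.elim fun p hp => hp b p.end_mem_support

lemma mono (hSK : S ⊆ K) (h : T.ReachableIn S a b) : T.ReachableIn K a b :=
  h.elim fun p hp => ⟨p, fun x hx => hSK (hp x hx)⟩

lemma inter_of_closed (hK : ∀ y z, y ∈ K → z ∈ S → T.Adj y z → z ∈ K) (ha : a ∈ K)
    (h : T.ReachableIn S a b) : T.ReachableIn (S ∩ K) a b := by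
  obtain ⟨p, hp⟩ := h
  refine ⟨p, ?_⟩
  induction p with
  | nil => simpa using ⟨hp _ (List.mem_singleton_self _), ha⟩
  | cons hadj p ih =>
    have hnext := hK _ _ ha (hp _ (by simp)) hadj
    simp only [Walk.support_cons, List.mem_cons, forall_eq_or_imp] at hp ⊢
    exact ⟨⟨hp.1, ha⟩, ih hnext hp.2⟩

end ReachableIn

def subtree (T : SimpleGraph V) (r v : V) : Set V := {x | IsAncestor T r v x}

@[simp]
lemma subtree_self (T : SimpleGraph V) (r : V) : T.subtree r r = Set.univ :=
  Set.eq_univ_of_forall fun _ p => p.val.start_mem_support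

namespace IsTree

variable (hT : T.IsTree) (r : V)

noncomputable def rootPath (v : V) : T.Path r v :=
  ⟨_, (hT.existsUnique_path r v).exists.choose_spec⟩

noncomputable def ancestors (v : V) : List V := (hT.rootPath r v).val.support

variable {hT r} {u v w y z : V}

lemma support_eq_ancestors {p : T.Walk r v} (hp : p.IsPath) : p.support = hT.ancestors r v := by
  rw [ancestors, ← (hT.isAcyclic.subsingleton_path r v).elim ⟨p, hp⟩ (hT.rootPath r v)]

lemma mem_subtree_iff : w ∈ T.subtree r v ↔ v ∈ hT.ancestors r w :=
  ⟨fun h => h _, fun h p => by rwa [support_eq_ancestors p.2]⟩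

lemma ancestors_injective : Function.Injective (hT.ancestors r) := by
  intro y z h
  have hy := (hT.rootPath r y).val.getLast_support
  have hz := (hT.rootPath r z).val.getLast_support
  simp only [ancestors] at h
  grind

-- `hT.ancestors r z = hT.ancestors r y ++ [z]` says that `z` is a child of `y`.
lemma ancestors_of_adj (h : T.Adj y z) :
    hT.ancestors r z = hT.ancestors r y ++ [z] ∨ hT.ancestors r y = hT.ancestors r z ++ [y] := by
  have hpy := (hT.rootPath r y).2
  have hpz := (hT.rootPath r z).2
  by_cases hy : y ∈ hT.ancestors r z
  · left
    rw [ancestors, hT.isAcyclic.path_concat hpy hpz h hy, Walk.support_concat, ancestors]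
  · right
    have hz := hT.isAcyclic.mem_support_of_ne_mem_support_of_adj_of_isPath hpy hpz h hy
    rw [ancestors, hT.isAcyclic.path_concat hpz hpy h.symm hz, Walk.support_concat, ancestors]

lemma eq_of_adj_of_mem_subtree_of_notMem (h : T.Adj y z) (hy : y ∈ T.subtree r u)
    (hz : z ∉ T.subtree r u) : y = u ∧ hT.ancestors r u = hT.ancestors r z ++ [u] := by
  rw [mem_subtree_iff (hT := hT)] at hy hz
  rcases ancestors_of_adj (hT := hT) (r := r) h with h' | h'
  · simp [h', hy] at hz
  · rw [h'] at hy
    simp only [List.mem_append, hz, List.mem_singleton, false_or] at hy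
    subst hy
    exact ⟨rfl, h'⟩

lemma exists_child (hw : w ∈ T.subtree r v) (hwv : w ≠ v) :
    ∃ u, hT.ancestors r u = hT.ancestors r v ++ [u] ∧ w ∈ T.subtree r u := by
  have hp := (hT.rootPath r w).2
  obtain ⟨p₀, p₁, hp₀, -, hsplit⟩ :=
    hp.mem_support_iff_exists_append.1 ((mem_subtree_iff (hT := hT)).1 hw)
  obtain ⟨u, hvu, q, rfl⟩ := Walk.exists_eq_cons_of_ne hwv.symm p₁
  rw [← Walk.concat_append] at hsplit
  have hpu : (p₀.concat hvu).IsPath := (hsplit ▸ hp).of_append_left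
  refine ⟨u, ?_, ?_⟩
  · rw [← support_eq_ancestors hpu, ← support_eq_ancestors hp₀, Walk.support_concat]
  · rw [mem_subtree_iff (hT := hT), ancestors, hsplit, Walk.mem_support_append_iff]
    exact Or.inl (Walk.end_mem_support _)

variable {S : Set V} {x : V}

lemma mem_subtree_of_reachableIn_of_child (hu : hT.ancestors r u = hT.ancestors r v ++ [u])
    (hv : v ∉ S) (hw : w ∈ T.subtree r u) (h : T.ReachableIn S w x) : x ∈ T.subtree r u := by
  refine (h.inter_of_closed (fun y z hy hz hyz => ?_) hw).mem_right.2
  by_contra hz'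
  obtain ⟨rfl, hy'⟩ := eq_of_adj_of_mem_subtree_of_notMem (hT := hT) hyz hy hz'
  rw [hu, List.append_cancel_right_eq] at hy'
  exact hv (ancestors_injective hy' ▸ hz)

lemma reachableIn_diff_subtree (hT : T.IsTree) (hv : v ∉ S) (hw : w ∉ T.subtree r v)
    (h : T.ReachableIn S w x) : T.ReachableIn (S \ T.subtree r v) w x :=
  h.inter_of_closed (fun _ _ hy hz hyz hz' =>
    hv ((eq_of_adj_of_mem_subtree_of_notMem (hT := hT) hyz.symm hz' hy).1 ▸ hz)) hw

theorem exists_separator [Finite V] (hT : T.IsTree) (r : V) (k : ℕ) (S : Set V) :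
    ∃ M : Set V, (k + 1) * M.ncard ≤ S.ncard ∧
      ∀ w, {x | T.ReachableIn (S \ M) w x}.ncard ≤ k := by
  induction hn : S.ncard using Nat.strong_induction_on generalizing S with
  | _ n ih =>
  by_cases hS : S.ncard ≤ k
  · exact ⟨∅, by simp, fun w =>
      (Set.ncard_le_ncard fun x hx => (ReachableIn.mem_right hx).1).trans hS⟩
  obtain ⟨v, hv, hdeepest⟩ := Set.exists_max_image {v | k < (T.subtree r v ∩ S).ncard}
    (fun v => (hT.ancestors r v).length) (Set.toFinite _)
    ⟨r, by simpa using hS⟩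
  set D := T.subtree r v ∩ S
  have hD : k < D.ncard := hv
  have hcard : (S \ D).ncard + D.ncard = S.ncard :=
    Set.ncard_sdiff_add_ncard_of_subset Set.inter_subset_right
  obtain ⟨M, hM, hcomp⟩ := ih _ (by omega) (S \ D) rfl
  refine ⟨insert v M, ?_, fun w => ?_⟩
  · calc (k + 1) * (insert v M).ncard ≤ (k + 1) * (M.ncard + 1) :=
          Nat.mul_le_mul_left _ (Set.ncard_insert_le v M)
      _ = (k + 1) * M.ncard + (k + 1) := by ring
      _ ≤ n := by omega
  have hvS : v ∉ S \ insert v M := fun h => h.2 (Set.mem_insert v M)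
  by_cases hw : w ∈ T.subtree r v
  · by_cases hwv : w = v
    · have hempty : {x | T.ReachableIn (S \ insert v M) w x} = ∅ :=
        Set.eq_empty_of_forall_notMem fun _ (hx : T.ReachableIn _ w _) => hvS (hwv ▸ hx.mem_left)
      simp [hempty]
    obtain ⟨u, hu, hwu⟩ := exists_child (hT := hT) hw hwv
    have hsmall : (T.subtree r u ∩ S).ncard ≤ k :=
      not_lt.1 fun h => by simpa [hu] using hdeepest u h
    refine le_trans (Set.ncard_le_ncard fun x hx => ?_) hsmall
    exact ⟨mem_subtree_of_reachableIn_of_child hu hvS hwu hx, (ReachableIn.mem_right hx).1⟩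
  · refine le_trans (Set.ncard_le_ncard fun x hx => ?_) (hcomp w)
    refine (hT.reachableIn_diff_subtree hvS hw hx).mono ?_
    intro y
    simp only [D, Set.mem_sdiff, Set.mem_insert_iff, Set.mem_inter_iff]
    tauto

end IsTree

lemma ConnectedComponent.ncard_supp_le_ncard_reachableIn [Finite V] {S : Set V}
    {c : (T.induce S).ConnectedComponent} {a : S} (ha : a ∈ c.supp) :
    c.supp.ncard ≤ {x | T.ReachableIn S a x}.ncard := by
  rw [← Set.ncard_image_of_injective _ Subtype.val_injective]
  refine Set.ncard_le_ncard ?_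
  rintro _ ⟨b, hb, rfl⟩
  obtain ⟨p⟩ := ConnectedComponent.exact (hb.trans ha.symm)
  refine ⟨p.reverse.map (Embedding.induce S).toHom, fun x hx => ?_⟩
  obtain ⟨y, -, rfl⟩ := List.mem_map.1 (p.reverse.support_map (Embedding.induce S).toHom ▸ hx)
  exact y.2

end SimpleGraph

theorem tree_partition_general {V : Type*} [Fintype V] (T : SimpleGraph V) (r : V)
    (hT : T.IsTree) (k : ℕ) (hk2 : 2 ≤ k) :
    ∃ M : Set V,
      (M.ncard : ℝ) ≤ 3 * (Fintype.card V : ℝ) / (k : ℝ) ∧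
      ∀ c : (T.induce Mᶜ).ConnectedComponent, c.supp.ncard ≤ k := by
  obtain ⟨M, hM, hcomp⟩ := hT.exists_separator r k Set.univ
  refine ⟨M, ?_, fun c => ?_⟩
  · rw [Set.ncard_univ, Nat.card_eq_fintype_card] at hM
    have hM' : ((k + 1) * M.ncard : ℝ) ≤ Fintype.card V := by exact_mod_cast hM
    have hk : (0 : ℝ) < k := by exact_mod_cast (by omega : 0 < k)
    rw [le_div_iff₀ hk]
    nlinarith
  · obtain ⟨a, rfl⟩ := c.exists_rep
    refine (SimpleGraph.ConnectedComponent.ncard_supp_le_ncard_reachableIn rfl).trans ?_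
    simpa [Set.compl_eq_univ_sdiff] using hcomp a

/-- **Tree partition lemma.** For every finite rooted tree `T` on `n` vertices and
every integer `k` with `2 ≤ k ≤ n`, there is a set `M` of vertices with
`|M| ≤ 3n/k` such that every connected component of the forest obtained from `T`
by deleting the vertices of `M` has at most `k` vertices. -/
theorem tree_partition {V : Type*} [Fintype V] (T : SimpleGraph V) (r : V)
    (hT : T.IsTree) (k : ℕ) (hk2 : 2 ≤ k) (hkn : k ≤ Fintype.card V) :
    ∃ M : Set V,
      (M.ncard : ℝ) ≤ 3 * (Fintype.card V : ℝ) / (k : ℝ) ∧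
      ∀ c : (T.induce Mᶜ).ConnectedComponent, c.supp.ncard ≤ k :=
  tree_partition_general T r hT k hk2
end

section
/- Let T be a rooted tree, let k ≥ 1 be an integer, and let M' ⊆ V(T) be a set of vertices such that every connected component of the forest obtained from T by deleting M' has at most k vertices. Define M = { x ∈ M' : |T(x)| ≥ k }. Then for every pair of vertices (u, v) such that u is an ancestor of v, if the unique path in T from u to v contains no vertex of M, then this path has at most 2k edges. -/
/-- The subtree `T(x)`: the set of all descendants of `x` (including `x`). -/
def Subtree {V : Type*} (T : SimpleGraph V) (r x : V) : Set V :=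
  {v | IsAncestor T r x v}

/-!
Split the `u`–`v` path at its first vertex `y` with `|T(y)| < k`. The vertices before `y` have
subtrees of size at least `k`, so, avoiding `M`, they avoid `M'`; being consecutive on the path,
they lie in one component of `T - M'`, so there are at most `k` of them. The vertices from `y` on
are descendants of `y`, so there are fewer than `k` of them.
-/

open SimpleGraph Walk

namespace SimpleGraph

variable {V : Type*} {G : SimpleGraph V}

namespace Walk

lemma exists_eq_append_first_not (P : V → Prop) {x v : V} (q : G.Walk x v) :
    (∀ z ∈ q.support, P z) ∨ ∃ (y : V) (q₁ : G.Walk x y) (q₂ : G.Walk y v),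
      q = q₁.append q₂ ∧ ¬ P y ∧ ∀ z ∈ q₁.support, z ≠ y → P z := by
  induction q with
  | @nil a =>
    by_cases ha : P a
    · exact .inl (by simpa using ha)
    · exact .inr ⟨a, nil, nil, rfl, ha, by simp⟩
  | @cons a b c hab q ih =>
    by_cases ha : P a
    · rcases ih with hall | ⟨y, q₁, q₂, rfl, hy, hq₁⟩
      · exact .inl (by simpa [ha] using hall)
      · refine .inr ⟨y, cons hab q₁, q₂, rfl, hy, ?_⟩
        simp only [support_cons, List.mem_cons, forall_eq_or_imp]
        exact ⟨fun _ => ha, hq₁⟩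
    · exact .inr ⟨a, nil, cons hab q, rfl, ha, by simp⟩

lemma IsPath.append_takeUntil [DecidableEq V] {r x v z : V} {p : G.Walk r x}
    {q : G.Walk x v} (h : (p.append q).IsPath) (hz : z ∈ q.support) :
    (p.append (q.takeUntil z hz)).IsPath := by
  have h' : ((p.append (q.takeUntil z hz)).append (q.dropUntil z hz)).IsPath := by
    rwa [← append_assoc, take_spec]
  exact h'.of_append_left

lemma IsPath.length_lt_ncard [Finite V] {u v : V} {p : G.Walk u v} (hp : p.IsPath)
    {s : Set V} (hps : ∀ z ∈ p.support, z ∈ s) : p.length < s.ncard := by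
  classical
  calc p.length < p.support.toFinset.card := by
        rw [List.toFinset_card_of_nodup hp.support_nodup, length_support]
        exact p.length.lt_succ_self
    _ = (p.support.toFinset : Set V).ncard := (Set.ncard_coe_finset _).symm
    _ ≤ s.ncard := Set.ncard_le_ncard (by simpa [Set.subset_def] using hps)

variable [Finite V] {s : Set V} {k : ℕ}

lemma IsPath.length_lt_of_forall_mem
    (hs : ∀ c : (G.induce s).ConnectedComponent, c.supp.ncard ≤ k)
    {u v : V} {p : G.Walk u v} (hp : p.IsPath) (hps : ∀ z ∈ p.support, z ∈ s) :
    p.length < k := by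
  classical
  let c := (G.induce s).connectedComponentMk ⟨u, hps u p.start_mem_support⟩
  have hpc : ∀ z ∈ p.support, z ∈ Subtype.val '' c.supp := fun z hz =>
    ⟨⟨z, hps z hz⟩, ConnectedComponent.sound <| Walk.reachable <| Walk.reverse <|
      (p.takeUntil z hz).induce s fun w hw => hps w (p.support_takeUntil_subset_support hz hw),
      rfl⟩
  calc p.length < (Subtype.val '' c.supp).ncard := hp.length_lt_ncard hpc
    _ = c.supp.ncard := Set.ncard_image_of_injective _ Subtype.val_injective
    _ ≤ k := hs c

lemma IsPath.length_le_of_forall_ne_mem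
    (hs : ∀ c : (G.induce s).ConnectedComponent, c.supp.ncard ≤ k)
    {x y : V} {p : G.Walk x y} (hp : p.IsPath) (hps : ∀ z ∈ p.support, z ≠ y → z ∈ s) :
    p.length ≤ k := by
  rw [← length_reverse]
  have hrev := hp.reverse
  have hrevs : ∀ z ∈ p.reverse.support, z ≠ y → z ∈ s := by
    simpa only [support_reverse, List.mem_reverse] using hps
  generalize p.reverse = q at hrev hrevs
  cases q with
  | nil => exact Nat.zero_le k
  | cons hadj q =>
    rw [cons_isPath_iff] at hrev
    exact hrev.1.length_lt_of_forall_mem hs fun z hz =>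
      hrevs z (by simp [hz]) (by rintro rfl; exact hrev.2 hz)

end Walk

lemma IsTree.isAncestor_of_mem_support (hG : G.IsTree) {r x z : V} {p : G.Walk r z}
    (hp : p.IsPath) (hx : x ∈ p.support) : IsAncestor G r x z := fun q => by
  have := hG.isAcyclic.subsingleton_path r z
  rwa [Subsingleton.elim q ⟨p, hp⟩]

lemma IsTree.exists_isPath_append_of_isAncestor (hG : G.IsTree) {r u v : V}
    (huv : IsAncestor G r u v) :
    ∃ (p : G.Walk r u) (q : G.Walk u v), (p.append q).IsPath := by
  classical
  obtain ⟨w⟩ := hG.connected.preconnected r v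
  have hu := huv w.toPath
  refine ⟨w.toPath.val.takeUntil u hu, w.toPath.val.dropUntil u hu, ?_⟩
  rw [take_spec]
  exact w.toPath.2

lemma IsTree.length_lt_ncard_subtree [Finite V] (hG : G.IsTree) {r y v : V}
    {p : G.Walk r y} {q : G.Walk y v} (h : (p.append q).IsPath) :
    q.length < (Subtree G r y).ncard := by
  classical
  exact h.of_append_right.length_lt_ncard fun z hz =>
    hG.isAncestor_of_mem_support (h.append_takeUntil hz)
      ((mem_support_append_iff _ _).2 (.inl p.end_mem_support))

end SimpleGraph

theorem short_path_avoiding_marked_general {V : Type*} [Fintype V] (T : SimpleGraph V)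
    (r : V) (hT : T.IsTree) (k : ℕ) (M' M : Set V)
    (hM' : ∀ c : (T.induce M'ᶜ).ConnectedComponent, c.supp.ncard ≤ k)
    (hM : M = {x ∈ M' | k ≤ (Subtree T r x).ncard})
    (u v : V) (huv : IsAncestor T r u v)
    (havoid : ∀ p : T.Path u v, ∀ w ∈ p.val.support, w ∉ M) :
    ∀ p : T.Path u v, p.val.length ≤ 2 * k := by
  subst hM
  intro p
  obtain ⟨P, q, hPq⟩ := hT.exists_isPath_append_of_isAncestor huv
  have hpq : p.val = q := by
    have := hT.isAcyclic.subsingleton_path u v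
    rw [Subsingleton.elim p ⟨q, hPq.of_append_right⟩]
  have hq : ∀ z ∈ q.support, k ≤ (Subtree T r z).ncard → z ∈ M'ᶜ :=
    fun z hz hzk hzM' => havoid ⟨q, hPq.of_append_right⟩ z hz ⟨hzM', hzk⟩
  rw [hpq]
  rcases q.exists_eq_append_first_not (fun z => k ≤ (Subtree T r z).ncard) with
    hall | ⟨y, q₁, q₂, rfl, hy, hq₁⟩
  · have := hPq.of_append_right.length_lt_of_forall_mem hM' fun z hz => hq z hz (hall z hz)
    omega
  · rw [append_assoc] at hPq
    have h₁ : q₁.length ≤ k :=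
      hPq.of_append_left.of_append_right.length_le_of_forall_ne_mem hM'
        fun z hz hzy => hq z ((mem_support_append_iff _ _).2 (.inl hz)) (hq₁ z hz hzy)
    have h₂ : q₂.length < k := (hT.length_lt_ncard_subtree hPq).trans (not_le.1 hy)
    rw [length_append]
    omega

/-- Let `M'` be a set of vertices of a rooted tree `T` such that every connected
component of the forest `T − M'` has at most `k` vertices, and let
`M = {x ∈ M' : |T(x)| ≥ k}`. Then for any ancestor-descendant pair `(u, v)`, if
the path in `T` from `u` to `v` avoids `M`, then this path has at most `2k` edges. -/
theorem short_path_avoiding_marked {V : Type*} [Fintype V] (T : SimpleGraph V)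
    (r : V) (hT : T.IsTree) (k : ℕ) (hk : 1 ≤ k) (M' M : Set V)
    (hM' : ∀ c : (T.induce M'ᶜ).ConnectedComponent, c.supp.ncard ≤ k)
    (hM : M = {x ∈ M' | k ≤ (Subtree T r x).ncard})
    (u v : V) (huv : IsAncestor T r u v)
    (havoid : ∀ p : T.Path u v, ∀ w ∈ p.val.support, w ∉ M) :
    ∀ p : T.Path u v, p.val.length ≤ 2 * k :=
  short_path_avoiding_marked_general T r hT k M' M hM' hM u v huv havoid
end
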